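/- arXiv:0709.2021 — 2 statements merged into one kernel-verified Lean document; each statement's English description precedes it below -/
import Mathlib

section
/- For all finite rank operators T : H → E and S : H → E*, the trace of S* ∘ T satisfies |tr(S* T)| ≤ ‖T‖_{γ(H,E)} · ‖S‖_{γ(H,E*)}. -/
/-! For the partial sums `X_N = ∑_{n<N} γ_n T b_n` and `Y_N = ∑_{n<N} γ_n S b_n`, the Gaussians
`γ_n` are orthonormal in `L²(P)`, so `𝔼 ⟨Y_N, X_N⟩ = ∑_{n<N} ⟨S b_n, T b_n⟩`. Cauchy–Schwarz bounds
this partial trace by `(𝔼‖Y_N‖²)^{1/2} (𝔼‖X_N‖²)^{1/2}`, and letting `N → ∞` gives the claim. -/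

open MeasureTheory ProbabilityTheory Filter
open scoped ENNReal NNReal RealInnerProductSpace

/-- A sequence of independent standard Gaussian random variables. -/
def IsGaussianSeq {Ω : Type*} [MeasurableSpace Ω] (P : Measure Ω) (g : ℕ → Ω → ℝ) : Prop :=
  iIndepFun (m := fun _ => Real.measurableSpace) g P ∧ ∀ n, P.map (g n) = gaussianReal 0 1

/-- A finite rank continuous linear operator. -/
def FiniteRank {H E : Type*} [NormedAddCommGroup H] [NormedSpace ℝ H]
    [NormedAddCommGroup E] [NormedSpace ℝ E] (T : H →L[ℝ] E) : Prop :=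
  FiniteDimensional ℝ (LinearMap.range (T : H →ₗ[ℝ] E))

/-- `c` is the γ-radonifying norm of `T : H → E` with respect to the orthonormal basis `b` of `H`
and the independent standard Gaussian sequence `g` on `(Ω, P)`:
`c ≥ 0` and `E‖∑_{n<N} γ_n T b_n‖² → c²`. -/
def HasGammaNorm {Ω H E : Type*} [MeasurableSpace Ω]
    [NormedAddCommGroup H] [InnerProductSpace ℝ H]
    [NormedAddCommGroup E] [NormedSpace ℝ E]
    (P : Measure Ω) (g : ℕ → Ω → ℝ) (b : ℕ → H) (T : H →L[ℝ] E) (c : ℝ) : Prop :=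
  0 ≤ c ∧ Filter.Tendsto (fun N => ∫ ω, ‖∑ n ∈ Finset.range N, g n ω • T (b n)‖ ^ 2 ∂P)
    Filter.atTop (nhds (c ^ 2))

section StandardGaussian

variable {Ω : Type*} [MeasurableSpace Ω] {P : Measure Ω} {X : Ω → ℝ}

lemma aemeasurable_of_map_eq_gaussianReal (hX : P.map X = gaussianReal 0 1) :
    AEMeasurable X P :=
  AEMeasurable.of_map_ne_zero (hX ▸ IsProbabilityMeasure.ne_zero _)

lemma memLp_two_of_map_eq_gaussianReal (hX : P.map X = gaussianReal 0 1) : MemLp X 2 P := by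
  have h : MemLp id 2 (P.map X) := hX ▸ memLp_id_gaussianReal 2
  exact (memLp_map_measure_iff aestronglyMeasurable_id
    (aemeasurable_of_map_eq_gaussianReal hX)).mp h

lemma integral_eq_zero_of_map_eq_gaussianReal (hX : P.map X = gaussianReal 0 1) :
    ∫ ω, X ω ∂P = 0 := by
  rw [← integral_map (f := fun x => x) (aemeasurable_of_map_eq_gaussianReal hX)
    aestronglyMeasurable_id, hX, integral_id_gaussianReal]

lemma integral_sq_eq_one_of_map_eq_gaussianReal (hX : P.map X = gaussianReal 0 1) :
    ∫ ω, X ω ^ 2 ∂P = 1 := by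
  have hXm := aemeasurable_of_map_eq_gaussianReal hX
  rw [← integral_map (f := fun x => x ^ 2) hXm (aestronglyMeasurable_id.pow 2), hX,
    ← variance_of_integral_eq_zero aemeasurable_id' integral_id_gaussianReal,
    variance_fun_id_gaussianReal, NNReal.coe_one]

end StandardGaussian

namespace IsGaussianSeq

variable {Ω E : Type*} [MeasurableSpace Ω] {P : Measure Ω} {g : ℕ → Ω → ℝ}
  [NormedAddCommGroup E] [NormedSpace ℝ E]

lemma integral_mul (hg : IsGaussianSeq P g) (n m : ℕ) :
    ∫ ω, g n ω * g m ω ∂P = if n = m then 1 else 0 := by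
  obtain ⟨hindep, hmap⟩ := hg
  split_ifs with h
  · subst h
    simpa [sq] using integral_sq_eq_one_of_map_eq_gaussianReal (hmap n)
  · rw [(hindep.indepFun h).integral_fun_mul_eq_mul_integral
      (aemeasurable_of_map_eq_gaussianReal (hmap n)).aestronglyMeasurable
      (aemeasurable_of_map_eq_gaussianReal (hmap m)).aestronglyMeasurable,
      integral_eq_zero_of_map_eq_gaussianReal (hmap n), zero_mul]

lemma memLp_sum_smul (hg : IsGaussianSeq P g) (s : Finset ℕ) (x : ℕ → E) :
    MemLp (fun ω => ∑ n ∈ s, g n ω • x n) 2 P :=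
  memLp_finsetSum s fun n _ =>
    (memLp_top_const (x n)).smul (memLp_two_of_map_eq_gaussianReal (hg.2 n))

lemma integral_sum_smul_apply_sum_smul (hg : IsGaussianSeq P g) (s : Finset ℕ)
    (φ : ℕ → E →L[ℝ] ℝ) (x : ℕ → E) :
    ∫ ω, (∑ n ∈ s, g n ω • φ n) (∑ m ∈ s, g m ω • x m) ∂P = ∑ n ∈ s, φ n (x n) := by
  have hint : ∀ n m, Integrable (fun ω => g n ω * g m ω * φ n (x m)) P := fun n m =>
    ((memLp_two_of_map_eq_gaussianReal (hg.2 n)).integrable_mul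
      (memLp_two_of_map_eq_gaussianReal (hg.2 m))).mul_const _
  have hexpand : ∀ ω, (∑ n ∈ s, g n ω • φ n) (∑ m ∈ s, g m ω • x m)
      = ∑ n ∈ s, ∑ m ∈ s, g n ω * g m ω * φ n (x m) := fun ω => by
    simp only [sum_apply, smul_apply, map_sum, map_smul, smul_eq_mul, Finset.mul_sum]
    rw [Finset.sum_comm]
    exact Finset.sum_congr rfl fun n _ => Finset.sum_congr rfl fun m _ => by ring
  simp_rw [hexpand]
  rw [integral_finsetSum _ fun n _ => integrable_finsetSum _ fun m _ => hint n m]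
  refine Finset.sum_congr rfl fun n hn => ?_
  simp_rw [integral_finsetSum _ fun m _ => hint n m, integral_mul_const, hg.integral_mul, ite_mul,
    one_mul, zero_mul, Finset.sum_ite_eq, if_pos hn]

end IsGaussianSeq

lemma abs_integral_apply_le_sqrt_mul_sqrt {Ω E : Type*} [MeasurableSpace Ω] {P : Measure Ω}
    [NormedAddCommGroup E] [NormedSpace ℝ E] {X : Ω → E} {Y : Ω → E →L[ℝ] ℝ}
    (hX : MemLp X 2 P) (hY : MemLp Y 2 P) :
    |∫ ω, Y ω (X ω) ∂P| ≤ √(∫ ω, ‖Y ω‖ ^ 2 ∂P) * √(∫ ω, ‖X ω‖ ^ 2 ∂P) := by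
  have hp : ENNReal.ofReal 2 = 2 := by norm_num
  calc |∫ ω, Y ω (X ω) ∂P|
      ≤ ∫ ω, |Y ω (X ω)| ∂P := abs_integral_le_integral_abs
    _ ≤ ∫ ω, ‖Y ω‖ * ‖X ω‖ ∂P :=
        integral_mono_of_nonneg (.of_forall fun _ => abs_nonneg _)
          (hY.norm.integrable_mul hX.norm) (.of_forall fun ω => (Y ω).le_opNorm (X ω))
    _ ≤ (∫ ω, ‖Y ω‖ ^ (2 : ℝ) ∂P) ^ (1 / 2 : ℝ) * (∫ ω, ‖X ω‖ ^ (2 : ℝ) ∂P) ^ (1 / 2 : ℝ) :=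
        integral_mul_le_Lp_mul_Lq_of_nonneg .two_two (.of_forall fun _ => norm_nonneg _)
          (.of_forall fun _ => norm_nonneg _) (hp ▸ hY.norm) (hp ▸ hX.norm)
    _ = √(∫ ω, ‖Y ω‖ ^ 2 ∂P) * √(∫ ω, ‖X ω‖ ^ 2 ∂P) := by
        simp only [Real.rpow_two, Real.sqrt_eq_rpow]

lemma HasGammaNorm.tendsto_sqrt_integral {Ω H E : Type*} [MeasurableSpace Ω]
    [NormedAddCommGroup H] [InnerProductSpace ℝ H] [NormedAddCommGroup E] [NormedSpace ℝ E]
    {P : Measure Ω} {g : ℕ → Ω → ℝ} {b : ℕ → H} {T : H →L[ℝ] E} {c : ℝ}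
    (h : HasGammaNorm P g b T c) :
    Tendsto (fun N => √(∫ ω, ‖∑ n ∈ Finset.range N, g n ω • T (b n)‖ ^ 2 ∂P)) atTop (nhds c) := by
  simpa only [Function.comp_def, Real.sqrt_sq h.1] using (Real.continuous_sqrt.tendsto _).comp h.2

theorem clark_ocone_statement0_general {Ω H E : Type*} [MeasurableSpace Ω]
    [NormedAddCommGroup H] [InnerProductSpace ℝ H]
    [NormedAddCommGroup E] [NormedSpace ℝ E]
    (P : Measure Ω)
    (g : ℕ → Ω → ℝ) (hg : IsGaussianSeq P g)
    (b : ℕ → H)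
    (T : H →L[ℝ] E) (S : H →L[ℝ] (E →L[ℝ] ℝ))
    (cT cS τ : ℝ)
    (hcT : HasGammaNorm P g b T cT) (hcS : HasGammaNorm P g b S cS)
    (hτ : HasSum (fun n => (S (b n)) (T (b n))) τ) :
    |τ| ≤ cT * cS := by
  have hpartial : ∀ N, |∑ n ∈ Finset.range N, S (b n) (T (b n))|
      ≤ √(∫ ω, ‖∑ n ∈ Finset.range N, g n ω • S (b n)‖ ^ 2 ∂P)
        * √(∫ ω, ‖∑ n ∈ Finset.range N, g n ω • T (b n)‖ ^ 2 ∂P) := fun N => by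
    rw [← hg.integral_sum_smul_apply_sum_smul]
    exact abs_integral_apply_le_sqrt_mul_sqrt (hg.memLp_sum_smul _ _) (hg.memLp_sum_smul _ _)
  rw [mul_comm]
  exact le_of_tendsto_of_tendsto' (continuous_abs.continuousAt.tendsto.comp hτ.tendsto_sum_nat)
    (hcS.tendsto_sqrt_integral.mul hcT.tendsto_sqrt_integral) hpartial

/-- For all finite rank operators `T : H → E` and `S : H → E*`,
`|tr(S* T)| ≤ ‖T‖_{γ(H,E)} ‖S‖_{γ(H,E*)}`, where the trace is `∑_n ⟨S b_n, T b_n⟩` for an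
orthonormal basis `(b_n)` of `H`. -/
theorem clark_ocone_statement0 {Ω H E : Type*} [MeasurableSpace Ω]
    [NormedAddCommGroup H] [InnerProductSpace ℝ H] [CompleteSpace H]
    [NormedAddCommGroup E] [NormedSpace ℝ E] [CompleteSpace E]
    (P : Measure Ω) [IsProbabilityMeasure P]
    (g : ℕ → Ω → ℝ) (hg : IsGaussianSeq P g)
    (b : ℕ → H) (hb : Orthonormal ℝ b)
    (hbtot : (Submodule.span ℝ (Set.range b)).topologicalClosure = ⊤)
    (T : H →L[ℝ] E) (S : H →L[ℝ] (E →L[ℝ] ℝ))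
    (hT : FiniteRank T) (hS : FiniteRank S)
    (cT cS τ : ℝ)
    (hcT : HasGammaNorm P g b T cT) (hcS : HasGammaNorm P g b S cS)
    (hτ : HasSum (fun n => (S (b n)) (T (b n))) τ) :
    |τ| ≤ cT * cS :=
  clark_ocone_statement0_general P g hg b T S cT cS τ hcT hcS hτ
end

section
/- For F ∈ S(Ω) ⊗ E and G ∈ S(Ω) ⊗ E*, the duality product satisfies the Leibniz rule D⟨F,G⟩ = ⟨DF,G⟩ + ⟨F,DG⟩, where ⟨DF,G⟩ and ⟨F,DG⟩ are the H-valued pairings ⟨R,x*⟩ := R* x* for R ∈ γ(H,E) and ⟨x,S⟩ := S* x for S ∈ γ(H,E*). -/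
open MeasureTheory ProbabilityTheory Filter
open scoped ENNReal NNReal RealInnerProductSpace

/-- `W` is an isonormal Gaussian process on `H` over `(Ω,P)`: `W` is (a.e.) linear in `h`
and each `W h` is a centred Gaussian with variance `‖h‖²`; by polarization this encodes
`E(W h₁ · W h₂) = ⟪h₁,h₂⟫`. -/
def IsIsonormal {Ω H : Type*} [MeasurableSpace Ω]
    [NormedAddCommGroup H] [InnerProductSpace ℝ H]
    (P : Measure Ω) (W : H → Ω → ℝ) : Prop :=
  (∀ h, AEMeasurable (W h) P) ∧
  (∀ h, P.map (W h) = gaussianReal 0 (‖h‖₊ ^ 2)) ∧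
  (∀ h₁ h₂, W (h₁ + h₂) =ᵐ[P] W h₁ + W h₂) ∧
  (∀ (c : ℝ) (h), W (c • h) =ᵐ[P] c • W h)


/-- `f ∈ C_b^∞(ℝⁿ)`: a smooth function which is bounded and has bounded derivatives
of all orders. -/
def CbSmooth {n : ℕ} (f : (Fin n → ℝ) → ℝ) : Prop :=
  ContDiff ℝ (⊤ : ℕ∞) f ∧ ∀ m : ℕ, ∃ C, ∀ y, ‖iteratedFDeriv ℝ m f y‖ ≤ C


/-- Leibniz rule for the duality product: for
`F = ∑_i f_i(W h₁,…,W h_n) ⊗ x_i ∈ S(Ω) ⊗ E` and `G = ∑_r g_r(W h₁,…,W h_n) ⊗ x*_r ∈ S(Ω) ⊗ E*`,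
`D⟨F,G⟩ = ⟨DF,G⟩ + ⟨F,DG⟩` as `H`-valued random variables, where
`⟨R,x*⟩ = R* x*` for `R ∈ γ(H,E)` and `⟨x,S⟩ = S* x` for `S ∈ γ(H,E*)`. -/
theorem clark_ocone_statement6 {Ω H E : Type*} [MeasurableSpace Ω]
    [NormedAddCommGroup H] [InnerProductSpace ℝ H] [CompleteSpace H]
    [NormedAddCommGroup E] [NormedSpace ℝ E] [CompleteSpace E]
    (P : Measure Ω) [IsProbabilityMeasure P]
    (W : H → Ω → ℝ) (hW : IsIsonormal P W)
    (m m' n : ℕ) (f : Fin m → (Fin n → ℝ) → ℝ) (g : Fin m' → (Fin n → ℝ) → ℝ)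
    (hf : ∀ i, CbSmooth (f i)) (hg : ∀ r, CbSmooth (g r))
    (h : Fin n → H) (x : Fin m → E) (xs : Fin m' → E →L[ℝ] ℝ) (ω : Ω) :
    (∑ j, (fderiv ℝ (fun y => ∑ r, g r y * (xs r (∑ i, f i y • x i)))
        (fun l => W (h l) ω) (Pi.single j 1)) • h j)
    = (∑ j, (∑ i, fderiv ℝ (f i) (fun l => W (h l) ω) (Pi.single j 1) *
          ((∑ r, g r (fun l => W (h l) ω) • xs r) (x i))) • h j)
      + (∑ j, (∑ r, fderiv ℝ (g r) (fun l => W (h l) ω) (Pi.single j 1) *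
          (xs r (∑ i, f i (fun l => W (h l) ω) • x i))) • h j) := by

  set a : Fin n → ℝ := fun l => W (h l) ω with ha
  have hdf : ∀ i, DifferentiableAt ℝ (f i) a := fun i =>
    ((hf i).1.differentiable (by simp)).differentiableAt
  have hdg : ∀ r, DifferentiableAt ℝ (g r) a := fun r =>
    ((hg r).1.differentiable (by simp)).differentiableAt
  -- the main derivative computation
  have key : ∀ v, fderiv ℝ (fun y => ∑ r, g r y * (xs r (∑ i, f i y • x i))) a v
      = ∑ r, ∑ i, (fderiv ℝ (g r) a v * (f i a * xs r (x i))
          + g r a * (fderiv ℝ (f i) a v * xs r (x i))) := by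
    intro v
    have hrw : (fun y => ∑ r, g r y * (xs r (∑ i, f i y • x i)))
        = fun y => ∑ r, ∑ i, g r y * (f i y * xs r (x i)) := by
      funext y
      simp [map_sum, Finset.mul_sum, smul_eq_mul]
    rw [hrw]
    have hterm : ∀ r i, HasFDerivAt (fun y => g r y * (f i y * xs r (x i)))
        ((f i a * xs r (x i)) • fderiv ℝ (g r) a
          + (g r a * xs r (x i)) • fderiv ℝ (f i) a) a := by
      intro r i
      have h1 : HasFDerivAt (g r) (fderiv ℝ (g r) a) a := (hdg r).hasFDerivAt
      have h2 : HasFDerivAt (fun y => f i y * xs r (x i))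
          ((xs r (x i)) • fderiv ℝ (f i) a) a := by
        simpa using (hdf i).hasFDerivAt.mul_const (xs r (x i))
      have := h1.mul h2
      refine this.congr_fderiv ?_
      ext w
      simp only [ContinuousLinearMap.add_apply, ContinuousLinearMap.smul_apply, smul_eq_mul]
      ring
    have hsum : HasFDerivAt (fun y => ∑ r, ∑ i, g r y * (f i y * xs r (x i)))
        (∑ r, ∑ i, ((f i a * xs r (x i)) • fderiv ℝ (g r) a
          + (g r a * xs r (x i)) • fderiv ℝ (f i) a)) a := by
      apply HasFDerivAt.fun_sum
      intro r _
      exact HasFDerivAt.fun_sum fun i _ => hterm r i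
    rw [hsum.fderiv]
    simp [mul_assoc, mul_left_comm, mul_comm]
  -- rewrite the RHS pairings
  have hR1 : ∀ i, ((∑ r, g r a • xs r) (x i)) = ∑ r, g r a * xs r (x i) := by
    intro i; simp
  have hR2 : ∀ r, (xs r (∑ i, f i a • x i)) = ∑ i, f i a * xs r (x i) := by
    intro r; simp [map_sum]
  calc (∑ j, (fderiv ℝ (fun y => ∑ r, g r y * (xs r (∑ i, f i y • x i)))
        a (Pi.single j 1)) • h j)
      = ∑ j, ((∑ i, fderiv ℝ (f i) a (Pi.single j 1) * ((∑ r, g r a • xs r) (x i)))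
          + (∑ r, fderiv ℝ (g r) a (Pi.single j 1) * (xs r (∑ i, f i a • x i)))) • h j := by
        refine Finset.sum_congr rfl fun j _ => ?_
        congr 1
        rw [key]
        simp only [hR1, hR2, Finset.mul_sum]
        simp only [Finset.sum_add_distrib]
        rw [add_comm]
        congr 1
        · rw [Finset.sum_comm]
          exact Finset.sum_congr rfl fun i _ => Finset.sum_congr rfl fun r _ => by ring
    _ = _ := by
        rw [← Finset.sum_add_distrib]
        refine Finset.sum_congr rfl fun j _ => ?_
        rw [add_smul]
end
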